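/- arXiv:1512.01398 — 3 statements merged into one kernel-verified Lean document; each statement's English description precedes it below -/
import Mathlib

section
/- Let n be a positive natural number, λ > 0, and z ∈ ℝⁿ (Euclidean space with the standard inner product and norm). Then the point d* = (z/‖z‖)·max(‖z‖ − 1/λ, 0) when z ≠ 0, and d* = 0 when z = 0, is the unique global minimizer over d ∈ ℝⁿ of the function d ↦ ‖d‖ + (λ/2)‖d − z‖². -/
/-!
`λ(z − d*)` is a subgradient of the norm at `d*`: it has norm at most `1` and pairs with `d*`
to `‖d*‖`. Expanding `‖d − z‖²` around `d*`, the subgradient inequality for the norm then gives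
`f d* + (λ/2)‖d − d*‖² ≤ f d` for the objective `f`, so every `d ≠ d*` is strictly worse.
-/

open RealInnerProductSpace

variable {E : Type*} [NormedAddCommGroup E] [InnerProductSpace ℝ E]

theorem norm_add_inner_sub_le_norm {g x : E} (hg : ‖g‖ ≤ 1) (hgx : ⟪g, x⟫ = ‖x‖) (y : E) :
    ‖x‖ + ⟪g, y - x⟫ ≤ ‖y‖ := by
  have hgy : ⟪g, y⟫ ≤ ‖y‖ := calc
    ⟪g, y⟫ ≤ ‖g‖ * ‖y‖ := real_inner_le_norm g y
    _ ≤ ‖y‖ := mul_le_of_le_one_left (norm_nonneg y) hg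
  rw [inner_sub_right, hgx]
  linarith

theorem norm_add_sq_sub_add_sq_sub_le_of_subgradient {lam : ℝ} {x z : E}
    (hg : ‖lam • (z - x)‖ ≤ 1) (hgx : ⟪lam • (z - x), x⟫ = ‖x‖) (y : E) :
    ‖x‖ + lam / 2 * ‖x - z‖ ^ 2 + lam / 2 * ‖y - x‖ ^ 2 ≤ ‖y‖ + lam / 2 * ‖y - z‖ ^ 2 := by
  have hsub := norm_add_inner_sub_le_norm hg hgx y
  have hexpand : ‖y - z‖ ^ 2 = ‖y - x‖ ^ 2 - 2 * ⟪y - x, z - x⟫ + ‖z - x‖ ^ 2 := by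
    rw [← norm_sub_sq_real, sub_sub_sub_cancel_right]
  rw [inner_smul_left, RCLike.conj_to_real, real_inner_comm] at hsub
  rw [hexpand, norm_sub_rev x z]
  linarith

open Classical in
noncomputable def shrink (z : E) (γ : ℝ) : E :=
  if z = 0 then 0 else (max (‖z‖ - γ) 0 / ‖z‖) • z

@[simp]
theorem shrink_zero (γ : ℝ) : shrink (0 : E) γ = 0 := by
  simp [shrink]

theorem shrink_of_norm_le {z : E} {γ : ℝ} (h : ‖z‖ ≤ γ) : shrink z γ = 0 := by
  simp [shrink, max_eq_right (sub_nonpos.mpr h)]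

theorem shrink_of_lt_norm {z : E} {γ : ℝ} (h : γ < ‖z‖) :
    shrink z γ = ((‖z‖ - γ) / ‖z‖) • z := by
  rcases eq_or_ne z 0 with rfl | hz
  · simp
  · simp [shrink, hz, max_eq_left (sub_nonneg.mpr h.le)]

theorem sub_shrink_of_lt_norm {z : E} {γ : ℝ} (h : γ < ‖z‖) :
    z - shrink z γ = (γ / ‖z‖) • z := by
  rcases eq_or_ne z 0 with rfl | hz
  · simp
  have hnorm : ‖z‖ ≠ 0 := norm_ne_zero_iff.mpr hz
  rw [shrink_of_lt_norm h]
  nth_rewrite 1 [← one_smul ℝ z]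
  rw [← sub_smul]
  congr 1
  field_simp
  ring

theorem norm_sub_shrink_le (z : E) {γ : ℝ} (hγ : 0 ≤ γ) : ‖z - shrink z γ‖ ≤ γ := by
  rcases le_or_gt ‖z‖ γ with h | h
  · simpa [shrink_of_norm_le h] using h
  · rw [sub_shrink_of_lt_norm h, norm_smul, Real.norm_of_nonneg (by positivity),
      div_mul_cancel₀ _ (hγ.trans_lt h).ne']

theorem inner_sub_shrink_shrink (z : E) (γ : ℝ) :
    ⟪z - shrink z γ, shrink z γ⟫ = γ * ‖shrink z γ‖ := by
  rcases le_or_gt ‖z‖ γ with h | h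
  · simp [shrink_of_norm_le h]
  rcases eq_or_ne z 0 with rfl | hz
  · simp
  have hnorm : ‖z‖ ≠ 0 := norm_ne_zero_iff.mpr hz
  rw [sub_shrink_of_lt_norm h, shrink_of_lt_norm h, real_inner_smul_left, real_inner_smul_right,
    real_inner_self_eq_norm_sq, norm_smul, Real.norm_of_nonneg (div_nonneg (sub_nonneg.mpr h.le)
    (norm_nonneg z))]
  field_simp

theorem vector_shrink_unique_min_general (n : ℕ) (lam : ℝ) (hlam : 0 < lam)
    (z : EuclideanSpace ℝ (Fin n)) :
    ∀ d : EuclideanSpace ℝ (Fin n),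
      d ≠ (if z = 0 then 0 else (max (‖z‖ - 1 / lam) 0 / ‖z‖) • z) →
      ‖(if z = 0 then 0 else (max (‖z‖ - 1 / lam) 0 / ‖z‖) • z : EuclideanSpace ℝ (Fin n))‖ +
          (lam / 2) *
            ‖(if z = 0 then 0 else (max (‖z‖ - 1 / lam) 0 / ‖z‖) • z : EuclideanSpace ℝ (Fin n))
              - z‖ ^ 2 <
        ‖d‖ + (lam / 2) * ‖d - z‖ ^ 2 := by
  intro d hd
  -- the `if` above decides `z = 0` by the instance of `EuclideanSpace`, `shrink` classically
  have hx : (if z = 0 then 0 else (max (‖z‖ - 1 / lam) 0 / ‖z‖) • z) = shrink z (1 / lam) := by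
    unfold shrink
    congr
  rw [hx] at hd ⊢
  set x := shrink z (1 / lam)
  have hg : ‖lam • (z - x)‖ ≤ 1 := calc
    ‖lam • (z - x)‖ = lam * ‖z - x‖ := by rw [norm_smul, Real.norm_of_nonneg hlam.le]
    _ ≤ lam * (1 / lam) := by gcongr; exact norm_sub_shrink_le z (by positivity)
    _ = 1 := by field_simp
  have hgx : ⟪lam • (z - x), x⟫ = ‖x‖ := by
    rw [real_inner_smul_left, inner_sub_shrink_shrink, ← mul_assoc, mul_one_div_cancel hlam.ne',
      one_mul]
  have hgap : 0 < lam / 2 * ‖d - x‖ ^ 2 := by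
    have := sub_ne_zero.mpr hd
    positivity
  linarith [norm_add_sq_sub_add_sq_sub_le_of_subgradient hg hgx d]

open Classical in
/-- In `ℝⁿ` (with the Euclidean norm), the vector shrinkage point
`d* = (z/‖z‖)·max(‖z‖ − 1/λ, 0)` (and `d* = 0` for `z = 0`) is the unique global minimizer
of `d ↦ ‖d‖ + (λ/2)‖d − z‖²`. -/
theorem vector_shrink_unique_min (n : ℕ) (hn : 0 < n) (lam : ℝ) (hlam : 0 < lam)
    (z : EuclideanSpace ℝ (Fin n)) :
    ∀ d : EuclideanSpace ℝ (Fin n),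
      d ≠ (if z = 0 then 0 else (max (‖z‖ - 1 / lam) 0 / ‖z‖) • z) →
      ‖(if z = 0 then 0 else (max (‖z‖ - 1 / lam) 0 / ‖z‖) • z : EuclideanSpace ℝ (Fin n))‖ +
          (lam / 2) *
            ‖(if z = 0 then 0 else (max (‖z‖ - 1 / lam) 0 / ‖z‖) • z : EuclideanSpace ℝ (Fin n))
              - z‖ ^ 2 <
        ‖d‖ + (lam / 2) * ‖d - z‖ ^ 2 :=
  vector_shrink_unique_min_general n lam hlam z
end

section
/- Let θ > 0, λ > 0, u ∈ ℝ², a ∈ ℝ² with a ≠ 0, and c ∈ ℝ, and set ρ(v) = ⟨a, v⟩ + c for v ∈ ℝ². Then the unique global minimizer over v ∈ ℝ² of the function v ↦ (1/(2θ))‖u − v‖² + λ|ρ(v)| is v* = u + λθ a if ρ(u) < −λθ‖a‖²; v* = u − λθ a if ρ(u) > λθ‖a‖²; and v* = u − (ρ(u)/‖a‖²) a if |ρ(u)| ≤ λθ‖a‖². In particular v* = u + TH(u), where TH is the thresholding operator defined by these three cases. -/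
open RealInnerProductSpace

/-- The thresholding operator `TH` of the TV-L1 optical flow algorithm, for the affine
residual `ρ(v) = ⟨a, v⟩ + c`. -/
noncomputable def TH (θ lam : ℝ) (a : EuclideanSpace ℝ (Fin 2)) (c : ℝ)
    (u : EuclideanSpace ℝ (Fin 2)) : EuclideanSpace ℝ (Fin 2) :=
  if ⟪a, u⟫ + c < -(lam * θ) * ‖a‖ ^ 2 then (lam * θ) • a
  else if lam * θ * ‖a‖ ^ 2 < ⟪a, u⟫ + c then -((lam * θ) • a)
  else -(((⟪a, u⟫ + c) / ‖a‖ ^ 2) • a)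

/-!
The energy is the sum of a strongly convex quadratic and a convex term, so a point satisfying the
first-order condition is its unique minimizer. Writing the candidate as `u - t • a`, the
optimality condition says that `t / (λθ)` is a subgradient of `|·|` at the residual `ρ(u - t • a)`.
Each branch of `TH` provides such a `t`: `t = ∓λθ` where the residual keeps its sign, and
`t = ρ(u)/‖a‖²`, which makes the residual vanish, in the middle case.
-/

section

variable {E : Type*} [NormedAddCommGroup E] [InnerProductSpace ℝ E]

lemma inner_sub_smul_self (a u : E) (t : ℝ) : ⟪a, u - t • a⟫ = ⟪a, u⟫ - t * ‖a‖ ^ 2 := by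
  rw [inner_sub_right, real_inner_smul_right, real_inner_self_eq_norm_sq]

theorem energy_lt_of_subgradient {θ lam t c : ℝ} {u a v : E} (hθ : 0 < θ)
    (ht : |t| ≤ lam * θ)
    (hsign : t * (⟪a, u - t • a⟫ + c) = lam * θ * |⟪a, u - t • a⟫ + c|)
    (hv : v ≠ u - t • a) :
    1 / (2 * θ) * ‖u - (u - t • a)‖ ^ 2 + lam * |⟪a, u - t • a⟫ + c| <
      1 / (2 * θ) * ‖u - v‖ ^ 2 + lam * |⟪a, v⟫ + c| := by
  set x := ⟪a, u - t • a⟫ + c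
  set w := v - (u - t • a)
  have hw : 0 < ‖w‖ ^ 2 := by
    have : w ≠ 0 := sub_ne_zero.mpr hv
    positivity
  have hnorm : ‖u - v‖ ^ 2 = ‖u - (u - t • a)‖ ^ 2 - 2 * t * ⟪a, w⟫ + ‖w‖ ^ 2 := by
    rw [show u - v = t • a - w by simp only [w]; abel, show u - (u - t • a) = t • a by abel,
      norm_sub_sq_real, real_inner_smul_left]
    ring
  have hres : ⟪a, v⟫ + c = x + ⟪a, w⟫ := by
    rw [show v = (u - t • a) + w by simp only [w]; abel, inner_add_right]
    ring
  have hsub : t * (x + ⟪a, w⟫) ≤ lam * θ * |x + ⟪a, w⟫| :=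
    calc t * (x + ⟪a, w⟫) ≤ |t| * |x + ⟪a, w⟫| := (le_abs_self _).trans (abs_mul _ _).le
      _ ≤ lam * θ * |x + ⟪a, w⟫| := mul_le_mul_of_nonneg_right ht (abs_nonneg _)
  rw [hnorm, hres, ← sub_pos]
  clear_value x w
  have hdiff : 1 / (2 * θ) * (‖u - (u - t • a)‖ ^ 2 - 2 * t * ⟪a, w⟫ + ‖w‖ ^ 2) +
      lam * |x + ⟪a, w⟫| - (1 / (2 * θ) * ‖u - (u - t • a)‖ ^ 2 + lam * |x|) =
      (‖w‖ ^ 2 / 2 + (lam * θ * |x + ⟪a, w⟫| - t * (x + ⟪a, w⟫))) / θ := by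
    field_simp
    linear_combination 2 * hsign
  rw [hdiff]
  exact div_pos (by linarith) hθ

end

theorem exists_TH_eq_neg_smul {θ lam c : ℝ} (hθ : 0 < θ) (hlam : 0 < lam)
    {u a : EuclideanSpace ℝ (Fin 2)} (ha : a ≠ 0) :
    ∃ t : ℝ, |t| ≤ lam * θ ∧
      t * (⟪a, u - t • a⟫ + c) = lam * θ * |⟪a, u - t • a⟫ + c| ∧
      TH θ lam a c u = -(t • a) := by
  have hlt : 0 < lam * θ := mul_pos hlam hθ
  simp only [inner_sub_smul_self]
  unfold TH
  split_ifs with hneg hpos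
  · refine ⟨-(lam * θ), by rw [abs_neg, abs_of_pos hlt], ?_, by rw [neg_smul, neg_neg]⟩
    rw [abs_of_neg (by linarith)]
    ring
  · refine ⟨lam * θ, (abs_of_pos hlt).le, ?_, rfl⟩
    rw [abs_of_pos (by linarith)]
  · have hna : ‖a‖ ^ 2 ≠ 0 := by positivity
    refine ⟨(⟪a, u⟫ + c) / ‖a‖ ^ 2, ?_, by simp [div_mul_cancel₀ _ hna], rfl⟩
    rw [abs_div, abs_of_nonneg (sq_nonneg ‖a‖)]
    exact div_le_of_le_mul₀ (sq_nonneg _) hlt.le (abs_le.mpr ⟨by linarith, by linarith⟩)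

/-- For `θ, λ > 0`, `a ≠ 0` and the affine residual `ρ(v) = ⟨a, v⟩ + c`, the unique global
minimizer of `v ↦ (1/(2θ))‖u − v‖² + λ|ρ(v)|` over `v ∈ ℝ²` is `v* = u + TH(u)`, where
`TH` is the three-case thresholding operator. -/
theorem thresholding_unique_min (θ lam : ℝ) (hθ : 0 < θ) (hlam : 0 < lam)
    (u a : EuclideanSpace ℝ (Fin 2)) (ha : a ≠ 0) (c : ℝ) :
    ∀ v : EuclideanSpace ℝ (Fin 2), v ≠ u + TH θ lam a c u →
      (1 / (2 * θ)) * ‖u - (u + TH θ lam a c u)‖ ^ 2 +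
          lam * |⟪a, u + TH θ lam a c u⟫ + c| <
        (1 / (2 * θ)) * ‖u - v‖ ^ 2 + lam * |⟪a, v⟫ + c| := by
  obtain ⟨t, ht, hsign, hTH⟩ := exists_TH_eq_neg_smul (c := c) (u := u) hθ hlam ha
  rw [hTH, ← sub_eq_add_neg]
  exact fun v hv => energy_lt_of_subgradient hθ ht hsign hv
end

section
/- Let Ω ⊆ ℝ² be open and bounded, θ > 0, λ > 0, v : ℝ² → ℝ continuous, and d, b : ℝ² → ℝ² continuously differentiable. For continuously differentiable w : ℝ² → ℝ define J(w) = ∫_Ω [ (1/(2θ))(w(x) − v(x))² + (λ/2)‖d(x) − b(x) − ∇w(x)‖² ] dx. If u : ℝ² → ℝ is twice continuously differentiable and satisfies J(u) ≤ J(w) for every continuously differentiable w : ℝ² → ℝ, then at every point x ∈ Ω the Euler–Lagrange equation holds: (1/θ)u(x) − λΔu(x) = (1/θ)v(x) − λ div(d − b)(x), where Δu = ∂²u/∂x₁² + ∂²u/∂x₂² and div(d − b) = ∂(d₁ − b₁)/∂x₁ + ∂(d₂ − b₂)/∂x₂. -/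
/-!
Perturbing the minimiser gives `J(u + tφ) = J(u) + t δJ(u; φ) + t² Q(φ)`, so minimality forces
the first variation `δJ(u; φ) = ∫_Ω (u - v) φ / θ - λ ⟪d - b - ∇u, ∇φ⟫` to vanish for every `C¹`
test function `φ`. For `φ` compactly supported in `Ω`, integrating by parts one coordinate at a
time turns this into `∫_Ω ((u - v) / θ + λ div (d - b - ∇u)) φ = 0`. The bracket is continuous,
so the fundamental lemma of the calculus of variations makes it vanish on `Ω`, and
`div ∇u = Δu`.
-/

open MeasureTheory Set
open scoped Gradient RealInnerProductSpace ContDiff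

theorem eq_zero_of_forall_mul_add_sq_mul_nonneg {a q : ℝ} (h : ∀ t, 0 ≤ t * a + t ^ 2 * q) :
    a = 0 := by
  have hdisc : discrim q a 0 ≤ 0 := discrim_le_zero fun t => by linarith [h t]
  rw [discrim] at hdisc
  exact pow_eq_zero_iff two_ne_zero |>.mp (le_antisymm (by linarith) (sq_nonneg a))

theorem Continuous.integrableOn_of_isBounded {X : Type*} [MetricSpace X] [ProperSpace X]
    [MeasurableSpace X] [OpensMeasurableSpace X] {μ : Measure X} [IsFiniteMeasureOnCompacts μ]
    {f : X → ℝ} {s : Set X} (hf : Continuous f) (hs : Bornology.IsBounded s) :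
    IntegrableOn f s μ :=
  (hf.continuousOn.integrableOn_compact hs.isCompact_closure).mono_set subset_closure

theorem IsOpen.eqOn_zero_of_setIntegral_contDiff_smul_eq_zero {E F : Type*}
    [NormedAddCommGroup E] [NormedSpace ℝ E] [FiniteDimensional ℝ E] [MeasurableSpace E]
    [BorelSpace E] [NormedAddCommGroup F] [NormedSpace ℝ F] [CompleteSpace F]
    {μ : Measure E} [IsLocallyFiniteMeasure μ] [μ.IsOpenPosMeasure]
    {U : Set E} (hU : IsOpen U) {f : E → F} (hf : ContinuousOn f U)
    (h : ∀ φ : E → ℝ, ContDiff ℝ ∞ φ → HasCompactSupport φ → tsupport φ ⊆ U →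
      ∫ x in U, φ x • f x ∂μ = 0) :
    EqOn f 0 U := by
  refine Measure.eqOn_open_of_ae_eq (μ := μ) ?_ hU hf continuousOn_const
  refine (ae_restrict_iff' hU.measurableSet).2 <|
    hU.ae_eq_zero_of_integral_contDiff_smul_eq_zero (hf.locallyIntegrableOn hU.measurableSet)
      fun φ hφ hφs hφU => ?_
  rw [← setIntegral_eq_integral_of_forall_compl_eq_zero fun x hx => ?_, h φ hφ hφs hφU]
  rw [image_eq_zero_of_notMem_tsupport fun hx' => hx (hφU hx'), zero_smul]

section Gradient

variable {E : Type*} [NormedAddCommGroup E] [InnerProductSpace ℝ E] [CompleteSpace E]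

theorem ContDiff.gradient {n : WithTop ℕ∞} {f : E → ℝ} (hf : ContDiff ℝ (n + 1) f) :
    ContDiff ℝ n (∇ f) :=
  (InnerProductSpace.toDual ℝ E).symm.contDiff.comp (hf.fderiv_right le_rfl)

theorem ContDiff.continuous_gradient {f : E → ℝ} (hf : ContDiff ℝ 1 f) : Continuous (∇ f) :=
  contDiff_zero.mp (hf.gradient (n := 0))

theorem gradient_add_const_mul {u φ : E → ℝ} {x : E} (hu : DifferentiableAt ℝ u x)
    (hφ : DifferentiableAt ℝ φ x) (t : ℝ) :
    ∇ (fun y => u y + t * φ y) x = ∇ u x + t • ∇ φ x := by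
  simp only [gradient]
  rw [fderiv_fun_add hu (hφ.const_mul t), fderiv_const_mul hφ, map_add, map_smul]

theorem gradient_eq_zero_of_notMem_tsupport {f : E → ℝ} {x : E} (hx : x ∉ tsupport f) :
    ∇ f x = 0 := by
  rw [gradient, image_eq_zero_of_notMem_tsupport fun h => hx (tsupport_fderiv_subset ℝ h), map_zero]

end Gradient

namespace EuclideanSpace

variable {ι : Type*} [Fintype ι] [DecidableEq ι]

theorem gradient_apply (f : EuclideanSpace ℝ ι → ℝ) (x : EuclideanSpace ℝ ι) (i : ι) :
    ∇ f x i = fderiv ℝ f x (single i 1) := by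
  rw [← inner_gradient_left, inner_single_right, one_mul, conj_trivial]

theorem inner_gradient_eq_sum (w : EuclideanSpace ℝ ι) (f : EuclideanSpace ℝ ι → ℝ)
    (x : EuclideanSpace ℝ ι) : ⟪w, ∇ f x⟫ = ∑ i, w i * fderiv ℝ f x (single i 1) := by
  simp only [PiLp.inner_apply, gradient_apply, RCLike.inner_apply', conj_trivial]

noncomputable def divergence (F : EuclideanSpace ℝ ι → EuclideanSpace ℝ ι)
    (x : EuclideanSpace ℝ ι) : ℝ :=
  ∑ i, fderiv ℝ (fun y => F y i) x (single i 1)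

theorem divergence_sub {F G : EuclideanSpace ℝ ι → EuclideanSpace ℝ ι} {x : EuclideanSpace ℝ ι}
    (hF : DifferentiableAt ℝ F x) (hG : DifferentiableAt ℝ G x) :
    divergence (fun y => F y - G y) x = divergence F x - divergence G x := by
  simp only [divergence, PiLp.sub_apply, ← Finset.sum_sub_distrib]
  refine Finset.sum_congr rfl fun i _ => ?_
  have hFi : DifferentiableAt ℝ (fun y => F y i) x := (proj (𝕜 := ℝ) i).differentiableAt.comp x hF
  have hGi : DifferentiableAt ℝ (fun y => G y i) x := (proj (𝕜 := ℝ) i).differentiableAt.comp x hG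
  rw [fderiv_fun_sub hFi hGi]
  rfl

theorem divergence_gradient (u : EuclideanSpace ℝ ι → ℝ) (x : EuclideanSpace ℝ ι) :
    divergence (∇ u) x = ∑ i, fderiv ℝ (fun y => fderiv ℝ u y (single i 1)) x (single i 1) := by
  simp only [divergence, gradient_apply]

theorem continuous_divergence {F : EuclideanSpace ℝ ι → EuclideanSpace ℝ ι}
    (hF : ContDiff ℝ 1 F) : Continuous (divergence F) := by
  unfold divergence
  fun_prop

variable {μ : Measure (EuclideanSpace ℝ ι)} [μ.IsAddHaarMeasure]
  {F : EuclideanSpace ℝ ι → EuclideanSpace ℝ ι} {φ : EuclideanSpace ℝ ι → ℝ}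
  {Ω : Set (EuclideanSpace ℝ ι)}

theorem integral_inner_gradient_eq_neg_integral_divergence_mul (hF : ContDiff ℝ 1 F)
    (hφ : ContDiff ℝ 1 φ) (hφs : HasCompactSupport φ) :
    ∫ x, ⟪F x, ∇ φ x⟫ ∂μ = -∫ x, divergence F x * φ x ∂μ := by
  have hFi (i : ι) : ContDiff ℝ 1 (fun y => F y i) := (proj (𝕜 := ℝ) i).contDiff.comp hF
  have hint_div (i : ι) :
      Integrable (fun x => fderiv ℝ (fun y => F y i) x (single i 1) * φ x) μ :=
    ((hFi i).continuous_fderiv one_ne_zero).clm_apply continuous_const |>.mul hφ.continuous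
      |>.integrable_of_hasCompactSupport hφs.mul_left
  have hint_grad (i : ι) : Integrable (fun x => F x i * fderiv ℝ φ x (single i 1)) μ :=
    (hFi i).continuous.mul ((hφ.continuous_fderiv one_ne_zero).clm_apply continuous_const)
      |>.integrable_of_hasCompactSupport (hφs.fderiv_apply (𝕜 := ℝ) _).mul_left
  simp only [inner_gradient_eq_sum, divergence, Finset.sum_mul]
  rw [integral_finsetSum _ fun i _ => hint_grad i, integral_finsetSum _ fun i _ => hint_div i,
    ← Finset.sum_neg_distrib]
  refine Finset.sum_congr rfl fun i _ => ?_
  exact integral_mul_fderiv_eq_neg_fderiv_mul_of_integrable (hint_div i) (hint_grad i)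
    ((hFi i).continuous.mul hφ.continuous |>.integrable_of_hasCompactSupport hφs.mul_left)
    (fun x _ => (hFi i).differentiable one_ne_zero x) (fun x _ => hφ.differentiable one_ne_zero x)

theorem setIntegral_inner_gradient_eq_neg_setIntegral_divergence_mul (hF : ContDiff ℝ 1 F)
    (hφ : ContDiff ℝ 1 φ) (hφs : HasCompactSupport φ) (hφΩ : tsupport φ ⊆ Ω) :
    ∫ x in Ω, ⟪F x, ∇ φ x⟫ ∂μ = -∫ x in Ω, divergence F x * φ x ∂μ := by
  rw [setIntegral_eq_integral_of_forall_compl_eq_zero fun x hx => ?_,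
    setIntegral_eq_integral_of_forall_compl_eq_zero fun x hx => ?_,
    integral_inner_gradient_eq_neg_integral_divergence_mul hF hφ hφs]
  · rw [image_eq_zero_of_notMem_tsupport fun h => hx (hφΩ h), mul_zero]
  · rw [gradient_eq_zero_of_notMem_tsupport fun h => hx (hφΩ h), inner_zero_right]

theorem eqOn_zero_of_forall_setIntegral_mul_sub_inner_gradient_eq_zero (hΩ : IsOpen Ω)
    {f : EuclideanSpace ℝ ι → ℝ} (hf : Continuous f) (hF : ContDiff ℝ 1 F) (lam : ℝ)
    (h : ∀ φ : EuclideanSpace ℝ ι → ℝ, ContDiff ℝ 1 φ → HasCompactSupport φ → tsupport φ ⊆ Ω →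
      ∫ x in Ω, (f x * φ x - lam * ⟪F x, ∇ φ x⟫) ∂μ = 0) :
    EqOn (fun x => f x + lam * divergence F x) 0 Ω := by
  have hdiv := continuous_divergence hF
  have hF' := hF.continuous
  refine hΩ.eqOn_zero_of_setIntegral_contDiff_smul_eq_zero (μ := μ)
    (Continuous.continuousOn (by fun_prop)) fun φ hφ hφs hφΩ => ?_
  have hφ1 : ContDiff ℝ 1 φ := hφ.of_le (by simp)
  have hφ' := hφ1.continuous
  have hgφ := hφ1.continuous_gradient
  have hint {g : EuclideanSpace ℝ ι → ℝ} (hg : Continuous g)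
      (hg0 : ∀ x ∉ tsupport φ, g x = 0) : IntegrableOn g Ω μ :=
    (hg.integrable_of_hasCompactSupport
      (hφs.mono' (Function.support_subset_iff'.2 hg0))).integrableOn
  calc ∫ x in Ω, φ x • (f x + lam * divergence F x) ∂μ
      = (∫ x in Ω, (f x * φ x - lam * ⟪F x, ∇ φ x⟫) ∂μ) +
          lam * ((∫ x in Ω, ⟪F x, ∇ φ x⟫ ∂μ) + ∫ x in Ω, divergence F x * φ x ∂μ) := by
        rw [← integral_add, ← integral_const_mul, ← integral_add]
        · exact integral_congr_ae (ae_of_all _ fun x => by simp only [smul_eq_mul]; ring)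
        all_goals refine hint (by fun_prop) fun x hx => ?_
        all_goals simp [image_eq_zero_of_notMem_tsupport hx, gradient_eq_zero_of_notMem_tsupport hx]
    _ = 0 := by
        rw [h φ hφ1 hφs hφΩ,
          setIntegral_inner_gradient_eq_neg_setIntegral_divergence_mul hF hφ1 hφs hφΩ]
        ring

end EuclideanSpace

/-- The functional `J` of the split Bregman `u`-subproblem, with `g = d - b`. -/
noncomputable def splitBregmanEnergy {E : Type*} [NormedAddCommGroup E] [InnerProductSpace ℝ E]
    [CompleteSpace E] [MeasurableSpace E] (μ : Measure E) (Ω : Set E) (θ lam : ℝ) (v : E → ℝ)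
    (g : E → E) (w : E → ℝ) : ℝ :=
  ∫ x in Ω, ((1 / (2 * θ)) * (w x - v x) ^ 2 + (lam / 2) * ‖g x - ∇ w x‖ ^ 2) ∂μ

section SplitBregman

variable {E : Type*} [NormedAddCommGroup E] [InnerProductSpace ℝ E] [ProperSpace E]
  [MeasurableSpace E] [OpensMeasurableSpace E] {μ : Measure E} [IsFiniteMeasureOnCompacts μ]
  {Ω : Set E} {θ lam : ℝ} {v : E → ℝ} {g : E → E} {u φ : E → ℝ}

theorem splitBregmanEnergy_add_const_mul (hΩ : Bornology.IsBounded Ω) (hv : Continuous v)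
    (hg : Continuous g) (hu : ContDiff ℝ 1 u) (hφ : ContDiff ℝ 1 φ) (t : ℝ) :
    splitBregmanEnergy μ Ω θ lam v g (fun x => u x + t * φ x) =
      splitBregmanEnergy μ Ω θ lam v g u
        + t * ∫ x in Ω, ((1 / θ) * (u x - v x) * φ x - lam * ⟪g x - ∇ u x, ∇ φ x⟫) ∂μ
        + t ^ 2 * ∫ x in Ω, ((1 / (2 * θ)) * φ x ^ 2 + (lam / 2) * ‖∇ φ x‖ ^ 2) ∂μ := by
  have hexpand (x : E) :
      (1 / (2 * θ)) * (u x + t * φ x - v x) ^ 2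
          + (lam / 2) * ‖g x - ∇ (fun y => u y + t * φ y) x‖ ^ 2 =
        ((1 / (2 * θ)) * (u x - v x) ^ 2 + (lam / 2) * ‖g x - ∇ u x‖ ^ 2)
          + t * ((1 / θ) * (u x - v x) * φ x - lam * ⟪g x - ∇ u x, ∇ φ x⟫)
          + t ^ 2 * ((1 / (2 * θ)) * φ x ^ 2 + (lam / 2) * ‖∇ φ x‖ ^ 2) := by
    rw [gradient_add_const_mul (hu.differentiable one_ne_zero x)
      (hφ.differentiable one_ne_zero x), ← sub_sub, norm_sub_sq_real, real_inner_smul_right,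
      norm_smul, Real.norm_eq_abs, mul_pow, sq_abs]
    ring
  have hu' := hu.continuous
  have hφ' := hφ.continuous
  have hgu := hu.continuous_gradient
  have hgφ := hφ.continuous_gradient
  unfold splitBregmanEnergy
  rw [integral_congr_ae (ae_of_all _ hexpand), integral_add, integral_add, integral_const_mul,
    integral_const_mul]
  all_goals exact Continuous.integrableOn_of_isBounded (by fun_prop) hΩ

theorem splitBregmanEnergy_firstVariation_eq_zero (hΩ : Bornology.IsBounded Ω)
    (hv : Continuous v) (hg : Continuous g) (hu : ContDiff ℝ 1 u)
    (hmin : ∀ w : E → ℝ, ContDiff ℝ 1 w →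
      splitBregmanEnergy μ Ω θ lam v g u ≤ splitBregmanEnergy μ Ω θ lam v g w)
    (hφ : ContDiff ℝ 1 φ) :
    ∫ x in Ω, ((1 / θ) * (u x - v x) * φ x - lam * ⟪g x - ∇ u x, ∇ φ x⟫) ∂μ = 0 := by
  refine eq_zero_of_forall_mul_add_sq_mul_nonneg
    (q := ∫ x in Ω, ((1 / (2 * θ)) * φ x ^ 2 + (lam / 2) * ‖∇ φ x‖ ^ 2) ∂μ) fun t => ?_
  have := hmin (fun x => u x + t * φ x) (hu.add (contDiff_const.mul hφ))
  rw [splitBregmanEnergy_add_const_mul hΩ hv hg hu hφ t] at this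
  linarith

end SplitBregman

open EuclideanSpace in
theorem strong_euler_lagrange_general
    (Ω : Set (EuclideanSpace ℝ (Fin 2))) (hΩo : IsOpen Ω) (hΩb : Bornology.IsBounded Ω)
    (θ lam : ℝ)
    (v : EuclideanSpace ℝ (Fin 2) → ℝ) (hv : Continuous v)
    (d b : EuclideanSpace ℝ (Fin 2) → EuclideanSpace ℝ (Fin 2))
    (hd : ContDiff ℝ 1 d) (hb : ContDiff ℝ 1 b)
    (u : EuclideanSpace ℝ (Fin 2) → ℝ) (hu : ContDiff ℝ 2 u)
    (hmin : ∀ w : EuclideanSpace ℝ (Fin 2) → ℝ, ContDiff ℝ 1 w →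
      (∫ x in Ω, ((1 / (2 * θ)) * (u x - v x) ^ 2 +
          (lam / 2) * ‖d x - b x - gradient u x‖ ^ 2)) ≤
        ∫ x in Ω, ((1 / (2 * θ)) * (w x - v x) ^ 2 +
          (lam / 2) * ‖d x - b x - gradient w x‖ ^ 2)) :
    ∀ x ∈ Ω,
      (1 / θ) * u x -
          lam * (∑ i : Fin 2,
            fderiv ℝ (fun y => fderiv ℝ u y (EuclideanSpace.single i (1 : ℝ))) x
              (EuclideanSpace.single i (1 : ℝ))) =
        (1 / θ) * v x -
          lam * (∑ i : Fin 2,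
            fderiv ℝ (fun y => d y i - b y i) x (EuclideanSpace.single i (1 : ℝ))) := by
  have hu1 : ContDiff ℝ 1 u := hu.of_le one_le_two
  have hgu : ContDiff ℝ 1 (∇ u) := hu.gradient
  have hg : ContDiff ℝ 1 (fun x => d x - b x) := hd.sub hb
  have hu' := hu1.continuous
  have hEL := eqOn_zero_of_forall_setIntegral_mul_sub_inner_gradient_eq_zero (μ := volume) hΩo
    (f := fun x => (1 / θ) * (u x - v x)) (by fun_prop) (hg.sub hgu) lam fun φ hφ _ _ =>
      splitBregmanEnergy_firstVariation_eq_zero (μ := volume) (θ := θ) (lam := lam)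
        (g := fun x => d x - b x) hΩb hv hg.continuous hu1 hmin hφ
  intro x hx
  have hx' : (1 / θ) * (u x - v x) + lam * divergence (fun y => d y - b y - ∇ u y) x = 0 :=
    hEL hx
  rw [divergence_sub (hg.differentiable one_ne_zero x)
    (hgu.differentiable one_ne_zero x), divergence_gradient] at hx'
  simp only [divergence, PiLp.sub_apply] at hx'
  linarith

/-- Strong Euler–Lagrange equation for the split Bregman `u`-subproblem: if the `C²`
function `u` minimizes `J(w) = ∫_Ω [(1/(2θ))(w − v)² + (λ/2)‖d − b − ∇w‖²]` over all `C¹`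
functions `w`, then at every point of `Ω`,
`(1/θ)u − λΔu = (1/θ)v − λ div(d − b)`, where the Laplacian and divergence are written in
terms of directional (partial) derivatives along the standard basis vectors. -/
theorem strong_euler_lagrange
    (Ω : Set (EuclideanSpace ℝ (Fin 2))) (hΩo : IsOpen Ω) (hΩb : Bornology.IsBounded Ω)
    (θ lam : ℝ) (hθ : 0 < θ) (hlam : 0 < lam)
    (v : EuclideanSpace ℝ (Fin 2) → ℝ) (hv : Continuous v)
    (d b : EuclideanSpace ℝ (Fin 2) → EuclideanSpace ℝ (Fin 2))
    (hd : ContDiff ℝ 1 d) (hb : ContDiff ℝ 1 b)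
    (u : EuclideanSpace ℝ (Fin 2) → ℝ) (hu : ContDiff ℝ 2 u)
    (hmin : ∀ w : EuclideanSpace ℝ (Fin 2) → ℝ, ContDiff ℝ 1 w →
      (∫ x in Ω, ((1 / (2 * θ)) * (u x - v x) ^ 2 +
          (lam / 2) * ‖d x - b x - gradient u x‖ ^ 2)) ≤
        ∫ x in Ω, ((1 / (2 * θ)) * (w x - v x) ^ 2 +
          (lam / 2) * ‖d x - b x - gradient w x‖ ^ 2)) :
    ∀ x ∈ Ω,
      (1 / θ) * u x -
          lam * (∑ i : Fin 2,
            fderiv ℝ (fun y => fderiv ℝ u y (EuclideanSpace.single i (1 : ℝ))) x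
              (EuclideanSpace.single i (1 : ℝ))) =
        (1 / θ) * v x -
          lam * (∑ i : Fin 2,
            fderiv ℝ (fun y => d y i - b y i) x (EuclideanSpace.single i (1 : ℝ))) :=
  strong_euler_lagrange_general Ω hΩo hΩb θ lam v hv d b hd hb u hu hmin
end
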